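/- Let n ≥ 2, let Ω ∈ ℝⁿ be a unit vector, let η ∈ ℝ, and let G_η(u) := e^{η(u·Ω)²}/Z_η with Z_η := ∫_{S^{n−1}} e^{η(v·Ω)²} dσ(v). Define S₂(η) := (n/(n−1)) ∫_{S^{n−1}} ( (u·Ω)² − 1/n ) G_η(u) dσ(u). Then the Q-tensor of G_η is uniaxial: ∫_{S^{n−1}} ( u⊗u − (1/n) Id ) G_η(u) dσ(u) = S₂(η) ( Ω⊗Ω − (1/n) Id ). -/

import Mathlib

open MeasureTheory Metric
open scoped RealInnerProductSpace

/-- The image of a point of the unit sphere of `ℝⁿ` under a linear isometry. -/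
noncomputable def sphereMap {n : ℕ}
    (e : EuclideanSpace ℝ (Fin n) ≃ₗᵢ[ℝ] EuclideanSpace ℝ (Fin n))
    (u : sphere (0 : EuclideanSpace ℝ (Fin n)) 1) :
    sphere (0 : EuclideanSpace ℝ (Fin n)) 1 :=
  ⟨e u, by
    rw [mem_sphere_zero_iff_norm, e.norm_map]
    exact mem_sphere_zero_iff_norm.mp u.2⟩

/-- A measure on the unit sphere of `ℝⁿ` is rotation invariant if it is invariant under
every linear isometry of `ℝⁿ`. -/
def RotationInvariant {n : ℕ} (σ : Measure (sphere (0 : EuclideanSpace ℝ (Fin n)) 1)) :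
    Prop :=
  ∀ e : EuclideanSpace ℝ (Fin n) ≃ₗᵢ[ℝ] EuclideanSpace ℝ (Fin n),
    σ.map (sphereMap e) = σ

/-- The Gibbs density `G_η(u) = e^{η(u·Ω)²}/Z_η` on the unit sphere, with
`Z_η = ∫ e^{η(v·Ω)²} dσ(v)`. -/
noncomputable def gibbs {n : ℕ} (σ : Measure (sphere (0 : EuclideanSpace ℝ (Fin n)) 1))
    (η : ℝ) (Ω : EuclideanSpace ℝ (Fin n))
    (u : sphere (0 : EuclideanSpace ℝ (Fin n)) 1) : ℝ :=
  Real.exp (η * ⟪(u : EuclideanSpace ℝ (Fin n)), Ω⟫ ^ 2) /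
    ∫ v : sphere (0 : EuclideanSpace ℝ (Fin n)) 1,
      Real.exp (η * ⟪(v : EuclideanSpace ℝ (Fin n)), Ω⟫ ^ 2) ∂σ

/-! The second-moment form `B(x, y) = ∫ ⟪u, x⟫ ⟪u, y⟫ G_η(u) dσ(u)` is invariant under every
isometry fixing `Ω`, because `σ` is rotation invariant and `G_η` depends on `u` only through
`u·Ω`. Invariance under the reflections in hyperplanes containing `Ω` forces
`B = t Ω⊗Ω + c (Id − Ω⊗Ω)` with `t = B(Ω, Ω)`. Taking the trace in an orthonormal basis, and
using `|u| = 1` and `∫ G_η dσ = 1`, gives `t + (n − 1) c = 1`; eliminating `c` leaves the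
uniaxial form with `S₂(η) = (n t − 1)/(n − 1)`. -/

theorem Submodule.reflection_orthogonal_singleton_apply_of_inner_eq_zero {E : Type*}
    [NormedAddCommGroup E] [InnerProductSpace ℝ E] {v w : E} (hw : ⟪w, v⟫ = 0) :
    reflection (ℝ ∙ w)ᗮ v = v :=
  reflection_mem_subspace_eq_self (mem_orthogonal_singleton_iff_inner_right.mpr hw)

theorem Continuous.integrable_of_compactSpace {X F : Type*} [TopologicalSpace X] [CompactSpace X]
    [MeasurableSpace X] [OpensMeasurableSpace X] [NormedAddCommGroup F] {μ : Measure X}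
    [IsFiniteMeasure μ] {f : X → F} (hf : Continuous f) : Integrable f μ :=
  hf.integrable_of_hasCompactSupport (.of_compactSpace f)

namespace LinearMap.BilinForm

variable {E : Type*} [NormedAddCommGroup E] [InnerProductSpace ℝ E]

def IsStabilizerInvariant (B : LinearMap.BilinForm ℝ E) (Ω : E) : Prop :=
  ∀ e : E ≃ₗᵢ[ℝ] E, e Ω = Ω → ∀ x y, B (e x) (e y) = B x y

namespace IsStabilizerInvariant

open Submodule

variable {B : LinearMap.BilinForm ℝ E} {Ω : E}

theorem apply_eq_zero_of_inner_eq_zero (hB : B.IsStabilizerInvariant Ω) {w : E}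
    (hw : ⟪w, Ω⟫ = 0) : B Ω w = 0 := by
  have hfix := reflection_orthogonal_singleton_apply_of_inner_eq_zero hw
  -- the reflection in `wᗮ` fixes `Ω` and negates `w`
  have h := hB _ hfix Ω w
  rw [hfix, reflection_orthogonalComplement_singleton_eq_neg, map_neg] at h
  linarith

theorem apply_self_eq_of_norm_eq (hB : B.IsStabilizerInvariant Ω) {p q : E}
    (hp : ⟪p, Ω⟫ = 0) (hq : ⟪q, Ω⟫ = 0) (hpq : ‖p‖ = ‖q‖) : B p p = B q q := by
  have hfix := reflection_orthogonal_singleton_apply_of_inner_eq_zero (w := p - q)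
    (by rw [inner_sub_left, hp, hq, sub_zero])
  -- the reflection in `(p - q)ᗮ` fixes `Ω` and swaps `p` and `q`
  simpa [reflection_sub hpq] using (hB _ hfix p p).symm

theorem exists_apply_self_eq (hB : B.IsStabilizerInvariant Ω) :
    ∃ c : ℝ, ∀ p, ⟪p, Ω⟫ = 0 → B p p = c * ‖p‖ ^ 2 := by
  by_cases h : ∃ w : E, w ≠ 0 ∧ ⟪w, Ω⟫ = 0
  · obtain ⟨w, hw0, hwΩ⟩ := h
    have hw : ‖w‖ ≠ 0 := norm_ne_zero_iff.mpr hw0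
    refine ⟨B w w / ‖w‖ ^ 2, fun p hp => ?_⟩
    have hpw : B p p = B ((‖p‖ / ‖w‖) • w) ((‖p‖ / ‖w‖) • w) :=
      hB.apply_self_eq_of_norm_eq hp (by rw [real_inner_smul_left, hwΩ, mul_zero])
        (by rw [norm_smul, Real.norm_of_nonneg (by positivity), div_mul_cancel₀ _ hw])
    rw [hpw, map_smul, map_smul, LinearMap.smul_apply, smul_eq_mul, smul_eq_mul]
    field_simp
  · push Not at h
    refine ⟨0, fun p hp => ?_⟩
    obtain rfl : p = 0 := by_contra fun hp0 => h p hp0 hp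
    simp

theorem exists_apply_eq_of_inner_eq_zero (hB : B.IsStabilizerInvariant Ω) (hsymm : B.IsSymm) :
    ∃ c : ℝ, ∀ p q, ⟪p, Ω⟫ = 0 → ⟪q, Ω⟫ = 0 → B p q = c * ⟪p, q⟫ := by
  obtain ⟨c, hc⟩ := hB.exists_apply_self_eq
  refine ⟨c, fun p q hp hq => ?_⟩
  have hsum := hc (p + q) (by rw [inner_add_left, hp, hq, add_zero])
  simp only [map_add, LinearMap.add_apply] at hsum
  rw [hc p hp, hc q hq, hsymm.eq q p, norm_add_sq_real] at hsum
  linarith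

theorem exists_eq (hB : B.IsStabilizerInvariant Ω) (hsymm : B.IsSymm) (hΩ : ‖Ω‖ = 1) :
    ∃ c : ℝ, ∀ x y, B x y = B Ω Ω * (⟪x, Ω⟫ * ⟪y, Ω⟫) + c * (⟪x, y⟫ - ⟪x, Ω⟫ * ⟪y, Ω⟫) := by
  obtain ⟨c, hc⟩ := hB.exists_apply_eq_of_inner_eq_zero hsymm
  refine ⟨c, fun x y => ?_⟩
  have hΩΩ : ⟪Ω, Ω⟫ = 1 := by rw [real_inner_self_eq_norm_sq, hΩ, one_pow]
  have hperp : ∀ z : E, ⟪z - ⟪z, Ω⟫ • Ω, Ω⟫ = 0 := fun z => by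
    rw [inner_sub_left, real_inner_smul_left, hΩΩ, mul_one, sub_self]
  have hsplit : ∀ z : E, z = ⟪z, Ω⟫ • Ω + (z - ⟪z, Ω⟫ • Ω) := fun z => by abel
  conv_lhs => rw [hsplit x, hsplit y]
  simp only [map_add, LinearMap.add_apply, map_smul, LinearMap.smul_apply, smul_eq_mul]
  rw [hB.apply_eq_zero_of_inner_eq_zero (hperp y), hsymm.eq (x - _) Ω,
    hB.apply_eq_zero_of_inner_eq_zero (hperp x), hc _ _ (hperp x) (hperp y)]
  simp only [inner_sub_left, inner_sub_right, real_inner_smul_left, real_inner_smul_right, hΩΩ,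
    real_inner_comm Ω]
  ring

end IsStabilizerInvariant

theorem sum_apply_basis_eq_of_uniaxial {B : LinearMap.BilinForm ℝ E} {Ω : E} (hΩ : ‖Ω‖ = 1)
    {t c : ℝ} (hB : ∀ x y, B x y = t * (⟪x, Ω⟫ * ⟪y, Ω⟫) + c * (⟪x, y⟫ - ⟪x, Ω⟫ * ⟪y, Ω⟫))
    {ι : Type*} [Fintype ι] (b : OrthonormalBasis ι ℝ E) :
    ∑ i, B (b i) (b i) = t + c * (Fintype.card ι - 1) := by
  have hparseval := b.sum_inner_mul_inner Ω Ω
  simp only [real_inner_comm (b _) Ω, real_inner_self_eq_norm_sq, hΩ, one_pow] at hparseval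
  simp only [hB, Finset.sum_add_distrib, ← Finset.mul_sum, Finset.sum_sub_distrib, hparseval]
  simp

end LinearMap.BilinForm

section MomentForm

variable {E : Type*} [NormedAddCommGroup E] [InnerProductSpace ℝ E] [FiniteDimensional ℝ E]
  [MeasurableSpace E] [BorelSpace E] (σ : Measure (sphere (0 : E) 1)) [IsFiniteMeasure σ]
  (g : C(sphere (0 : E) 1, ℝ))

theorem integrable_inner_mul_inner_mul (x y : E) :
    Integrable (fun u : sphere (0 : E) 1 => ⟪(u : E), x⟫ * ⟪(u : E), y⟫ * g u) σ :=
  (by fun_prop : Continuous _).integrable_of_compactSpace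

noncomputable def momentForm : LinearMap.BilinForm ℝ E :=
  LinearMap.mk₂ ℝ (fun x y => ∫ u, ⟪(u : E), x⟫ * ⟪(u : E), y⟫ * g u ∂σ)
    (fun x x' y => by
      rw [← integral_add (integrable_inner_mul_inner_mul σ g x y)
        (integrable_inner_mul_inner_mul σ g x' y)]
      simp only [inner_add_right, add_mul])
    (fun a x y => by
      rw [smul_eq_mul, ← integral_const_mul]
      simp only [real_inner_smul_right, mul_assoc])
    (fun x y y' => by
      rw [← integral_add (integrable_inner_mul_inner_mul σ g x y)
        (integrable_inner_mul_inner_mul σ g x y')]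
      simp only [inner_add_right, mul_add, add_mul])
    (fun a x y => by
      rw [smul_eq_mul, ← integral_const_mul]
      congr 1 with u
      rw [real_inner_smul_right]
      ring)

theorem momentForm_apply (x y : E) :
    momentForm σ g x y = ∫ u, ⟪(u : E), x⟫ * ⟪(u : E), y⟫ * g u ∂σ :=
  rfl

theorem momentForm_isSymm : (momentForm σ g).IsSymm :=
  ⟨fun x y => by simp only [momentForm_apply, mul_comm ⟪_, x⟫]⟩

theorem sum_momentForm_basis {ι : Type*} [Fintype ι] (b : OrthonormalBasis ι ℝ E) :
    ∑ i, momentForm σ g (b i) (b i) = ∫ u, g u ∂σ := by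
  simp only [momentForm_apply]
  rw [← integral_finsetSum _ fun i _ => integrable_inner_mul_inner_mul σ g _ _]
  congr 1 with u
  have hparseval := b.sum_inner_mul_inner (u : E) u
  simp only [real_inner_comm (u : E) (b _), real_inner_self_eq_norm_sq, norm_eq_of_mem_sphere,
    one_pow] at hparseval
  rw [← Finset.sum_mul, hparseval, one_mul]

theorem integral_inner_mul_inner_sub_mul (x y : E) (a : ℝ) :
    ∫ u, (⟪(u : E), x⟫ * ⟪(u : E), y⟫ - a) * g u ∂σ = momentForm σ g x y - a * ∫ u, g u ∂σ := by
  simp only [sub_mul]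
  rw [integral_sub (integrable_inner_mul_inner_mul σ g x y)
    (g.continuous.integrable_of_compactSpace.const_mul a),
    integral_const_mul, momentForm_apply]

end MomentForm

section RotationInvariant

variable {n : ℕ} (σ : Measure (sphere (0 : EuclideanSpace ℝ (Fin n)) 1))

theorem continuous_sphereMap (e : EuclideanSpace ℝ (Fin n) ≃ₗᵢ[ℝ] EuclideanSpace ℝ (Fin n)) :
    Continuous (sphereMap e) :=
  (e.continuous.comp continuous_subtype_val).subtype_mk _

@[simp]
theorem coe_sphereMap (e : EuclideanSpace ℝ (Fin n) ≃ₗᵢ[ℝ] EuclideanSpace ℝ (Fin n))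
    (u : sphere (0 : EuclideanSpace ℝ (Fin n)) 1) :
    (sphereMap e u : EuclideanSpace ℝ (Fin n)) = e u :=
  rfl

theorem RotationInvariant.integral_comp_sphereMap (hinv : RotationInvariant σ)
    (e : EuclideanSpace ℝ (Fin n) ≃ₗᵢ[ℝ] EuclideanSpace ℝ (Fin n))
    {f : sphere (0 : EuclideanSpace ℝ (Fin n)) 1 → ℝ} (hf : AEStronglyMeasurable f σ) :
    ∫ u, f (sphereMap e u) ∂σ = ∫ u, f u ∂σ := by
  rw [← integral_map (continuous_sphereMap e).aemeasurable (by rwa [hinv e]), hinv e]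

theorem continuous_gibbs (η : ℝ) (Ω : EuclideanSpace ℝ (Fin n)) : Continuous (gibbs σ η Ω) := by
  unfold gibbs
  fun_prop

theorem integral_gibbs [IsFiniteMeasure σ] [NeZero σ] (η : ℝ) (Ω : EuclideanSpace ℝ (Fin n)) :
    ∫ u, gibbs σ η Ω u ∂σ = 1 := by
  simp only [gibbs]
  rw [integral_div]
  exact div_self (integral_exp_pos (by fun_prop : Continuous _).integrable_of_compactSpace).ne'

theorem gibbs_sphereMap (η : ℝ) {Ω : EuclideanSpace ℝ (Fin n)}
    {e : EuclideanSpace ℝ (Fin n) ≃ₗᵢ[ℝ] EuclideanSpace ℝ (Fin n)} (he : e Ω = Ω)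
    (u : sphere (0 : EuclideanSpace ℝ (Fin n)) 1) :
    gibbs σ η Ω (sphereMap e u) = gibbs σ η Ω u := by
  simp only [gibbs, sphereMap]
  rw [← he, e.inner_map_map, he]

theorem momentForm_isStabilizerInvariant [IsFiniteMeasure σ] (hinv : RotationInvariant σ)
    (g : C(sphere (0 : EuclideanSpace ℝ (Fin n)) 1, ℝ)) {Ω : EuclideanSpace ℝ (Fin n)}
    (hg : ∀ e : EuclideanSpace ℝ (Fin n) ≃ₗᵢ[ℝ] EuclideanSpace ℝ (Fin n), e Ω = Ω →
      ∀ u, g (sphereMap e u) = g u) :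
    (momentForm σ g).IsStabilizerInvariant Ω := fun e he x y => by
  rw [momentForm_apply, ← hinv.integral_comp_sphereMap σ e
    (integrable_inner_mul_inner_mul σ g _ _).aestronglyMeasurable]
  simp only [coe_sphereMap, e.inner_map_map, hg e he, momentForm_apply]

end RotationInvariant

/-- The Q-tensor of the Gibbs density is uniaxial: `Q_{G_η} = S₂(η) (Ω⊗Ω − Id/n)` with
`S₂(η) = (n/(n−1)) ∫ ((u·Ω)² − 1/n) G_η dσ`, stated entrywise. -/
theorem gibbs_Q_tensor_uniaxial (n : ℕ) (hn : 2 ≤ n)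
    (σ : Measure (sphere (0 : EuclideanSpace ℝ (Fin n)) 1))
    (hprob : IsProbabilityMeasure σ) (hinv : RotationInvariant σ)
    (Ω : EuclideanSpace ℝ (Fin n)) (hΩ : ‖Ω‖ = 1) (η : ℝ) :
    ∀ i j : Fin n,
      (∫ u : sphere (0 : EuclideanSpace ℝ (Fin n)) 1,
          ((u : EuclideanSpace ℝ (Fin n)) i * (u : EuclideanSpace ℝ (Fin n)) j
            - (if i = j then (1 : ℝ) / n else 0)) * gibbs σ η Ω u ∂σ)
        = ((n : ℝ) / ((n : ℝ) - 1) *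
            ∫ u : sphere (0 : EuclideanSpace ℝ (Fin n)) 1,
              (⟪(u : EuclideanSpace ℝ (Fin n)), Ω⟫ ^ 2 - 1 / n) * gibbs σ η Ω u ∂σ) *
          (Ω i * Ω j - (if i = j then (1 : ℝ) / n else 0)) := by
  intro i j
  let g : C(sphere (0 : EuclideanSpace ℝ (Fin n)) 1, ℝ) := ⟨gibbs σ η Ω, continuous_gibbs σ η Ω⟩
  have hg : ∫ u, g u ∂σ = 1 := integral_gibbs σ η Ω
  have hB := momentForm_isStabilizerInvariant σ hinv g fun _ he => gibbs_sphereMap σ η he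
  obtain ⟨c, hc⟩ := hB.exists_eq (momentForm_isSymm σ g) hΩ
  have htrace := LinearMap.BilinForm.sum_apply_basis_eq_of_uniaxial hΩ hc
    (EuclideanSpace.basisFun (Fin n) ℝ)
  rw [sum_momentForm_basis, hg, Fintype.card_fin] at htrace
  have hQ := integral_inner_mul_inner_sub_mul σ g (EuclideanSpace.single i 1)
    (EuclideanSpace.single j 1) (if i = j then (1 : ℝ) / n else 0)
  have hS := integral_inner_mul_inner_sub_mul σ g Ω Ω (1 / n)
  simp only [EuclideanSpace.inner_single_right, one_mul, conj_trivial, hg, mul_one] at hQ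
  simp only [← sq, hg, mul_one] at hS
  rw [show ⇑g = gibbs σ η Ω from rfl] at hQ hS
  have hn2 : (2 : ℝ) ≤ n := by exact_mod_cast hn
  have hc' : c = (1 - momentForm σ g Ω Ω) / (n - 1) := by
    rw [eq_div_iff (by linarith)]
    linarith
  rw [hQ, hS, hc, hc']
  simp only [EuclideanSpace.inner_single_left, PiLp.single_apply, conj_trivial, one_mul]
  have hn0 : (n : ℝ) ≠ 0 := by linarith
  have hn1 : (n : ℝ) - 1 ≠ 0 := by linarith
  split_ifs <;> field_simp <;> ring
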